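/- arXiv:0804.3074 — 2 statements merged into one kernel-verified Lean document; each statement's English description precedes it below -/
import Mathlib

section
/- For integers q ≥ 2 and 0 ≤ k ≤ n, [n choose k]_{q,t} = Σ_λ ∏_{i=1}^{k} (t^{q^k - q^{k-i}})^{δ_i(λ)} · [q^{λ_i}]_{t^{q^k - q^{k-i}}}, where the sum is over partitions λ = (λ_1 ≥ ... ≥ λ_k ≥ 0) with λ_1 ≤ n-k, and δ_i(λ) := Σ_{j=λ_{i+1}}^{λ_i - 1} q^j (with λ_{k+1} := 0), and [N]_s := (1-s^N)/(1-s). -/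
noncomputable section

/-- `[N]_s := (1 - s^N)/(1 - s)`. -/
def qint (N : ℕ) (s : RatFunc ℚ) : RatFunc ℚ := (1 - s ^ N) / (1 - s)

/-- `λ_{i+1}` for a partition encoded by `f : Fin k → ℕ` (with `λ_{k+1} = 0`). -/
def nextPart {k : ℕ} (f : Fin k → ℕ) (i : Fin k) : ℕ :=
  if h : (i : ℕ) + 1 < k then f ⟨(i : ℕ) + 1, h⟩ else 0

/-- `δ_i(λ) := Σ_{j=λ_{i+1}}^{λ_i - 1} q^j`. -/
def deltaStat (q : ℕ) {k : ℕ} (f : Fin k → ℕ) (i : Fin k) : ℕ :=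
  ∑ j ∈ Finset.Ico (nextPart f i) (f i), q ^ j

/-!
Let `S(k, m; t)` be the sum of `∏ᵢ sᵢ^δᵢ(λ) [q^λᵢ]_{sᵢ}`, where `sᵢ = t^(q^k - q^(k-1-i))`, over the
partitions `λ` with at most `k` parts, all `< m`, and let `G_k(t) = ∏_{i<k} (1 - t^(q^k - q^i))`.
Sorting the partitions by whether their last part vanishes gives
`S(k+1, m+1; t) = S(k, m+1; t^q) + t^(q^(k+1)-1) · G_{k+1}(t^q) / G_{k+1}(t) · S(k+1, m; t^q)`:
dropping a zero last part turns each `sᵢ` into the corresponding base for `t^q`, and lowering every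
part by one uses `δᵢ(λ + 1) = q δᵢ(λ) + [i = k]` and `[q^(N+1)]_s = (1 - s^q)/(1 - s) · [q^N]_{s^q}`.
The (q,t)-binomials obey the same Pascal-type recursion, so induction on `k` and `m` proves the
identity for every `t` that is not a root of unity, in particular for `t = X`.
-/

open Finset

theorem pow_pow_sub_pow_succ {M : Type*} [Monoid M] (t : M) (q a b : ℕ) :
    t ^ (q ^ (a + 1) - q ^ (b + 1)) = (t ^ q) ^ (q ^ a - q ^ b) := by
  rw [← pow_mul, Nat.mul_sub, ← pow_succ', ← pow_succ']

theorem one_sub_pow_ne_zero {R : Type*} [Ring R] {t : R} (ht : ¬IsOfFinOrder t) {m : ℕ}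
    (hm : m ≠ 0) : 1 - t ^ m ≠ 0 :=
  sub_ne_zero.2 fun h => ht (isOfFinOrder_iff_pow_eq_one.2 ⟨m, Nat.pos_of_ne_zero hm, h.symm⟩)

theorem RatFunc.not_isOfFinOrder_X {K : Type*} [Field K] : ¬IsOfFinOrder (RatFunc.X : RatFunc K) := by
  rintro hX
  obtain ⟨m, hm, h⟩ := isOfFinOrder_iff_pow_eq_one.1 hX
  refine RatFunc.transcendental_X ⟨Polynomial.X ^ m - Polynomial.C (1 : K),
    Polynomial.X_pow_sub_C_ne_zero hm 1, ?_⟩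
  simp [h]

section Falling

variable {K : Type*} [Field K] {q : ℕ}

def qtFall (q : ℕ) (t : K) (n k : ℕ) : K := ∏ i ∈ range k, (1 - t ^ (q ^ n - q ^ i))

def qtBinom (q : ℕ) (t : K) (n k : ℕ) : K := qtFall q t n k / qtFall q t k k

theorem qtFall_succ (t : K) (n k : ℕ) :
    qtFall q t n (k + 1) = qtFall q t n k * (1 - t ^ (q ^ n - q ^ k)) :=
  prod_range_succ _ _

theorem qtFall_succ_succ (t : K) (n k : ℕ) :
    qtFall q t (n + 1) (k + 1) = (1 - t ^ (q ^ (n + 1) - 1)) * qtFall q (t ^ q) n k := by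
  simp only [qtFall, prod_range_succ', pow_pow_sub_pow_succ, pow_zero]
  ring

theorem qtFall_eq_prod_fin (t : K) (n k : ℕ) :
    qtFall q t n k = ∏ i : Fin k, (1 - t ^ (q ^ n - q ^ (k - 1 - (i : ℕ)))) := by
  rw [Fin.prod_univ_eq_prod_range (fun i => 1 - t ^ (q ^ n - q ^ (k - 1 - i))),
    prod_range_reflect (fun i => 1 - t ^ (q ^ n - q ^ i))]
  rfl

variable (hq : 1 < q) {t : K} (ht : ¬IsOfFinOrder t)
include hq ht

theorem qtFall_ne_zero {n k : ℕ} (h : k ≤ n) : qtFall q t n k ≠ 0 :=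
  prod_ne_zero_iff.2 fun i hi => one_sub_pow_ne_zero ht
    (Nat.sub_ne_zero_of_lt (Nat.pow_lt_pow_right hq (by simp at hi; omega)))

theorem qtBinom_self (k : ℕ) : qtBinom q t k k = 1 :=
  div_self (qtFall_ne_zero hq ht le_rfl)

theorem qtBinom_succ_succ {n k : ℕ} (h : k ≤ n) :
    qtBinom q t (n + 1) (k + 1)
      = qtBinom q (t ^ q) n k
        + t ^ (q ^ (k + 1) - 1) * (qtFall q (t ^ q) (k + 1) (k + 1) / qtFall q t (k + 1) (k + 1))
          * qtBinom q (t ^ q) n (k + 1) := by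
  have htq : ¬IsOfFinOrder (t ^ q) := fun h' => ht (h'.of_pow (by omega))
  have hpow : 1 < q ^ (k + 1) := Nat.one_lt_pow (by omega) hq
  have hle : q ^ (k + 1) ≤ q ^ (n + 1) := Nat.pow_le_pow_right (by omega) (by omega)
  have hexp : t ^ (q ^ (k + 1) - 1) * (t ^ q) ^ (q ^ n - q ^ k) = t ^ (q ^ (n + 1) - 1) := by
    rw [← pow_pow_sub_pow_succ, ← pow_add]
    congr 1
    omega
  have h₁ : 1 - t ^ (q ^ (k + 1) - 1) ≠ 0 := one_sub_pow_ne_zero ht (by omega)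
  have h₂ := qtFall_ne_zero hq htq (le_refl k)
  have h₃ := qtFall_ne_zero hq htq (le_refl (k + 1))
  rw [qtBinom, qtBinom, qtBinom, qtFall_succ_succ t n k, qtFall_succ_succ t k k,
    qtFall_succ (t ^ q) n k]
  field_simp
  linear_combination (qtFall q (t ^ q) n k) * hexp

end Falling

theorem sum_Ico_pow_succ (q a b : ℕ) :
    ∑ j ∈ Ico (a + 1) (b + 1), q ^ j = q * ∑ j ∈ Ico a b, q ^ j := by
  rw [← sum_Ico_add', mul_sum]
  simp only [pow_succ']

theorem nextPart_last {k : ℕ} (f : Fin (k + 1) → ℕ) : nextPart f (Fin.last k) = 0 :=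
  dif_neg (by simp)

theorem nextPart_castSucc {k : ℕ} {f : Fin (k + 1) → ℕ} (hf : f (Fin.last k) = 0) (i : Fin k) :
    nextPart f i.castSucc = nextPart (Fin.init f) i := by
  unfold nextPart
  by_cases h : (i : ℕ) + 1 < k
  · rw [dif_pos (by simp), dif_pos h]
    rfl
  · rw [dif_pos (by simp), dif_neg h, ← hf]
    exact congrArg f (Fin.ext (by simp; omega))

theorem deltaStat_castSucc {q k : ℕ} {f : Fin (k + 1) → ℕ} (hf : f (Fin.last k) = 0) (i : Fin k) :
    deltaStat q f i.castSucc = deltaStat q (Fin.init f) i := by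
  rw [deltaStat, deltaStat, nextPart_castSucc hf]
  rfl

theorem deltaStat_add_one (q : ℕ) {k : ℕ} (f : Fin (k + 1) → ℕ) (i : Fin (k + 1)) :
    deltaStat q (fun j => f j + 1) i = (if Fin.last k = i then 1 else 0) + q * deltaStat q f i := by
  induction i using Fin.lastCases with
  | last =>
    rw [deltaStat, deltaStat, nextPart_last, nextPart_last, if_pos rfl,
      sum_eq_sum_Ico_succ_bot (by omega), pow_zero, sum_Ico_pow_succ]
  | cast i =>
    have h : ((Fin.castSucc i : Fin (k + 1)) : ℕ) + 1 < k + 1 := by simp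
    rw [deltaStat, deltaStat, nextPart, nextPart, dif_pos h, dif_pos h,
      if_neg (Fin.castSucc_ne_last i).symm, zero_add, sum_Ico_pow_succ]

theorem qint_one {s : RatFunc ℚ} (hs : 1 - s ≠ 0) : qint 1 s = 1 := by
  rw [qint, pow_one, div_self hs]

theorem qint_pow_succ {q : ℕ} {s : RatFunc ℚ} (hs : 1 - s ^ q ≠ 0) (N : ℕ) :
    qint (q ^ (N + 1)) s = (1 - s ^ q) / (1 - s) * qint (q ^ N) (s ^ q) := by
  rw [qint, qint, pow_succ', pow_mul, div_mul_div_comm, mul_comm (1 - s ^ q),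
    mul_div_mul_right _ _ hs]

def partitionWeight (q : ℕ) (t : RatFunc ℚ) {k : ℕ} (f : Fin k → ℕ) : RatFunc ℚ :=
  ∏ i : Fin k, (t ^ (q ^ k - q ^ (k - 1 - (i : ℕ)))) ^ deltaStat q f i
    * qint (q ^ f i) (t ^ (q ^ k - q ^ (k - 1 - (i : ℕ))))

section Weight

variable {q : ℕ} (hq : 1 < q) {t : RatFunc ℚ} (ht : ¬IsOfFinOrder t)
include hq ht

theorem partitionWeight_of_last_eq_zero {k : ℕ} {f : Fin (k + 1) → ℕ} (hf : f (Fin.last k) = 0) :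
    partitionWeight q t f = partitionWeight q (t ^ q) (Fin.init f) := by
  have hδ : deltaStat q f (Fin.last k) = 0 := by simp [deltaStat, nextPart_last, hf]
  have hs : 1 - t ^ (q ^ (k + 1) - q ^ (k + 1 - 1 - (Fin.last k : ℕ))) ≠ 0 := by
    have : 1 < q ^ (k + 1) := Nat.one_lt_pow (by omega) hq
    refine one_sub_pow_ne_zero ht ?_
    simp only [Fin.val_last, Nat.add_sub_cancel, Nat.sub_self, pow_zero]
    omega
  rw [partitionWeight, partitionWeight, Fin.prod_univ_castSucc, hδ, hf, pow_zero, one_mul,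
    pow_zero, qint_one hs, mul_one]
  refine prod_congr rfl fun i _ => ?_
  rw [deltaStat_castSucc hf, Fin.val_castSucc, show k + 1 - 1 - (i : ℕ) = k - 1 - i + 1 by omega,
    pow_pow_sub_pow_succ]
  rfl

theorem partitionWeight_add_one {k : ℕ} (g : Fin (k + 1) → ℕ) :
    partitionWeight q t (fun j => g j + 1)
      = t ^ (q ^ (k + 1) - 1) * (qtFall q (t ^ q) (k + 1) (k + 1) / qtFall q t (k + 1) (k + 1))
        * partitionWeight q (t ^ q) g := by
  set w : Fin (k + 1) → ℕ := fun i => q ^ (k + 1) - q ^ (k + 1 - 1 - (i : ℕ)) with hw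
  have hfactor (i : Fin (k + 1)) :
      (t ^ w i) ^ deltaStat q (fun j => g j + 1) i * qint (q ^ (g i + 1)) (t ^ w i)
        = (t ^ w i) ^ (if Fin.last k = i then 1 else 0) * ((1 - (t ^ q) ^ w i) / (1 - t ^ w i))
          * (((t ^ q) ^ w i) ^ deltaStat q g i * qint (q ^ g i) ((t ^ q) ^ w i)) := by
    have hwi : w i ≠ 0 :=
      Nat.sub_ne_zero_of_lt (Nat.pow_lt_pow_right hq (by omega))
    have hs : 1 - (t ^ w i) ^ q ≠ 0 := by
      rw [← pow_mul]
      exact one_sub_pow_ne_zero ht (Nat.mul_ne_zero hwi (by omega))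
    rw [deltaStat_add_one, pow_add, pow_mul, qint_pow_succ hs, pow_right_comm t q]
    ring
  rw [partitionWeight, prod_congr rfl fun i _ => hfactor i, prod_mul_distrib, prod_mul_distrib,
    prod_pow_boole, if_pos (mem_univ _), prod_div_distrib, ← qtFall_eq_prod_fin,
    ← qtFall_eq_prod_fin, partitionWeight]
  simp [hw]

end Weight

theorem Fin.antitone_snoc {α : Type*} [Preorder α] {k : ℕ} {g : Fin k → α} (hg : Antitone g)
    {a : α} (ha : ∀ i, a ≤ g i) : Antitone (Fin.snoc (α := fun _ => α) g a) := by
  intro i j hij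
  induction i using Fin.lastCases with
  | last => rw [Fin.last_le_iff.1 hij]
  | cast i =>
    induction j using Fin.lastCases with
    | last => simpa using ha i
    | cast j => simpa using hg (Fin.castSucc_le_castSucc_iff.1 hij)

def boxPartitions (k m : ℕ) : Finset (Fin k → Fin m) :=
  univ.filter fun f => ∀ i j : Fin k, i ≤ j → f j ≤ f i

theorem mem_boxPartitions {k m : ℕ} {f : Fin k → Fin m} : f ∈ boxPartitions k m ↔ Antitone f := by
  simp [boxPartitions, Antitone]

section BoxSums

variable {q : ℕ} (hq : 1 < q) {t : RatFunc ℚ} (ht : ¬IsOfFinOrder t)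
include hq ht

theorem sum_boxPartitions_filter_last_eq_zero (k m : ℕ) :
    ∑ f ∈ (boxPartitions (k + 1) (m + 1)).filter (fun f => f (Fin.last k) = 0),
        partitionWeight q t (fun j => (f j : ℕ))
      = ∑ g ∈ boxPartitions k (m + 1), partitionWeight q (t ^ q) (fun j => (g j : ℕ)) := by
  refine sum_nbij' Fin.init (fun g => Fin.snoc g 0) ?_ ?_ ?_ ?_ ?_
  · intro f hf
    simp only [mem_filter, mem_boxPartitions] at hf ⊢
    exact hf.1.comp_monotone Fin.strictMono_castSucc.monotone
  · intro g hg
    simp only [mem_filter, mem_boxPartitions] at hg ⊢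
    exact ⟨Fin.antitone_snoc hg fun i => Fin.zero_le _, Fin.snoc_last _ _⟩
  · intro f hf
    simp only [mem_filter] at hf
    conv_rhs => rw [← Fin.snoc_init_self f, hf.2]
  · intro g _
    exact Fin.init_snoc _ _
  · intro f hf
    simp only [mem_filter] at hf
    exact partitionWeight_of_last_eq_zero hq ht (by simp [hf.2])

theorem sum_boxPartitions_filter_last_ne_zero (k m : ℕ) :
    ∑ f ∈ (boxPartitions (k + 1) (m + 1)).filter (fun f => ¬f (Fin.last k) = 0),
        partitionWeight q t (fun j => (f j : ℕ))
      = t ^ (q ^ (k + 1) - 1) * (qtFall q (t ^ q) (k + 1) (k + 1) / qtFall q t (k + 1) (k + 1))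
        * ∑ g ∈ boxPartitions (k + 1) m, partitionWeight q (t ^ q) (fun j => (g j : ℕ)) := by
  rw [mul_sum]
  symm
  refine sum_nbij (fun g => Fin.succ ∘ g) ?_ ?_ ?_ ?_
  · intro g hg
    simp only [mem_filter, mem_boxPartitions] at hg ⊢
    exact ⟨Fin.strictMono_succ.monotone.comp_antitone hg, Fin.succ_ne_zero _⟩
  · intro g₁ _ g₂ _ h
    exact funext fun i => Fin.succ_injective _ (congrFun h i)
  · intro f hf
    simp only [coe_filter, Set.mem_ofPred_eq, mem_boxPartitions] at hf
    have hne (i : Fin (k + 1)) : f i ≠ 0 :=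
      fun h => hf.2 (nonpos_iff_eq_zero.1 (h ▸ hf.1 (Fin.le_last i)))
    refine ⟨fun i => (f i).pred (hne i), ?_, funext fun i => Fin.succ_pred _ _⟩
    exact mem_boxPartitions.2 fun i j hij => Fin.pred_le_pred_iff.2 (hf.1 hij)
  · intro g _
    exact (partitionWeight_add_one hq ht _).symm

theorem sum_boxPartitions_succ_succ (k m : ℕ) :
    ∑ f ∈ boxPartitions (k + 1) (m + 1), partitionWeight q t (fun j => (f j : ℕ))
      = ∑ g ∈ boxPartitions k (m + 1), partitionWeight q (t ^ q) (fun j => (g j : ℕ))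
        + t ^ (q ^ (k + 1) - 1) * (qtFall q (t ^ q) (k + 1) (k + 1) / qtFall q t (k + 1) (k + 1))
          * ∑ g ∈ boxPartitions (k + 1) m, partitionWeight q (t ^ q) (fun j => (g j : ℕ)) := by
  rw [← sum_filter_add_sum_filter_not _ (fun f => f (Fin.last k) = 0),
    sum_boxPartitions_filter_last_eq_zero hq ht, sum_boxPartitions_filter_last_ne_zero hq ht]

end BoxSums

theorem sum_boxPartitions_partitionWeight {q : ℕ} (hq : 1 < q) {t : RatFunc ℚ}
    (ht : ¬IsOfFinOrder t) (k m : ℕ) :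
    ∑ f ∈ boxPartitions k (m + 1), partitionWeight q t (fun j => (f j : ℕ))
      = qtBinom q t (m + k) k := by
  induction k generalizing t m with
  | zero => simp [boxPartitions, partitionWeight, qtBinom, qtFall]
  | succ k ih =>
    induction m generalizing t with
    | zero =>
      have htq : ¬IsOfFinOrder (t ^ q) := fun h => ht (h.of_pow (by omega))
      rw [sum_boxPartitions_succ_succ hq ht, ih htq, zero_add, zero_add, qtBinom_self hq htq,
        qtBinom_self hq ht]
      simp [boxPartitions]
    | succ m ihm =>
      have htq : ¬IsOfFinOrder (t ^ q) := fun h => ht (h.of_pow (by omega))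
      rw [sum_boxPartitions_succ_succ hq ht, ih htq, ihm htq,
        show m + 1 + (k + 1) = m + k + 1 + 1 by omega, show m + 1 + k = m + k + 1 by omega,
        show m + (k + 1) = m + k + 1 by omega]
      exact (qtBinom_succ_succ hq ht (by omega)).symm

/-- For integers `q ≥ 2` and `0 ≤ k ≤ n`,
`[n choose k]_{q,t} = Σ_λ ∏_{i=1}^{k} (t^{q^k - q^{k-i}})^{δ_i(λ)} · [q^{λ_i}]_{t^{q^k - q^{k-i}}}`,
where λ ranges over partitions `(λ_1 ≥ … ≥ λ_k ≥ 0)` with `λ_1 ≤ n-k`. -/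
theorem qtbinom_partition_sum (q n k : ℕ) (hq : 2 ≤ q) (hk : k ≤ n) :
    (∏ i ∈ Finset.range k,
        (1 - (RatFunc.X : RatFunc ℚ) ^ (q ^ n - q ^ i)) / (1 - RatFunc.X ^ (q ^ k - q ^ i)))
      = ∑ f ∈ Finset.univ.filter
          (fun f : Fin k → Fin (n - k + 1) => ∀ i j : Fin k, i ≤ j → f j ≤ f i),
          ∏ i : Fin k,
            ((RatFunc.X : RatFunc ℚ) ^ (q ^ k - q ^ (k - 1 - (i : ℕ))))
                ^ (deltaStat q (fun j => (f j : ℕ)) i)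
              * qint (q ^ (f i : ℕ)) (RatFunc.X ^ (q ^ k - q ^ (k - 1 - (i : ℕ)))) := by
  have h := sum_boxPartitions_partitionWeight hq RatFunc.not_isOfFinOrder_X k (n - k)
  rw [Nat.sub_add_cancel hk] at h
  rw [prod_div_distrib]
  exact h.symm

end
end

section
/- For m, k ≥ 0 and n ≥ k, the principal specializations of Macdonald's Schur analogues for hook and near-hook shapes satisfy S_{(m,1^k)}(1,t,...,t^n) + S_{(m+1,1^{k-1})}(1,t,...,t^{n-1}) = H_m(1,t,...,t^n) · E_k(1,t,...,t^{n-1}). -/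
/-!
Put `u r = t ^ q ^ r` and `c = n - 1 - k`. Each specialization is a ratio of Vandermonde products
in the `u`'s, and the exponents `λ_{N-j} + j` of the four hooks are `{0, …, n} \ {c} ∪ {m + n}`,
`{0, …, n - 1} \ {c} ∪ {m + n}`, `{0, …, n - 1} ∪ {m + n}` and `{0, …, n - 1} \ {c} ∪ {n}`.
After cancelling the Vandermonde factors they share, the identity reduces to
`u (m + n) - u c = (u (m + n) - u n) + (u n - u c)`.
-/

noncomputable section

/-- The principal specialization `S_λ(1, t, …, t^{N-1})` of Macdonald's 7th-variation Schur
function, via the Vandermonde product formula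
`∏_{0 ≤ i < j ≤ N-1} (t^{q^{λ_{N-j}+j}} - t^{q^{λ_{N-i}+i}})/(t^{q^j} - t^{q^i})`,
where `lam` is the (1-indexed) sequence of parts of `λ`. -/
def Sspec (q N : ℕ) (lam : ℕ → ℕ) (t : RatFunc ℚ) : RatFunc ℚ :=
  ∏ j ∈ Finset.range N, ∏ i ∈ Finset.range j,
    (t ^ q ^ (lam (N - j) + j) - t ^ q ^ (lam (N - i) + i)) / (t ^ q ^ j - t ^ q ^ i)

/-- The hook partition `(m, 1^k)`, as a 1-indexed sequence of parts. -/
def hookLam (m k : ℕ) : ℕ → ℕ := fun i => if i = 1 then m else if i ≤ k + 1 then 1 else 0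

open Finset

section Vandermonde

variable {K : Type*} [CommRing K]

def vandermondeProd (x : ℕ → K) (N : ℕ) : K :=
  ∏ j ∈ range N, ∏ i ∈ range j, (x j - x i)

theorem vandermondeProd_succ (x : ℕ → K) (N : ℕ) :
    vandermondeProd x (N + 1) = vandermondeProd x N * ∏ i ∈ range N, (x N - x i) :=
  prod_range_succ _ _

theorem vandermondeProd_congr {x y : ℕ → K} {N : ℕ} (h : ∀ j < N, x j = y j) :
    vandermondeProd x N = vandermondeProd y N :=
  prod_congr rfl fun j hj => prod_congr rfl fun i hi => by
    rw [h j (mem_range.1 hj), h i ((mem_range.1 hi).trans (mem_range.1 hj))]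

theorem vandermondeProd_ne_zero [IsDomain K] {x : ℕ → K} (hx : Function.Injective x) (N : ℕ) :
    vandermondeProd x N ≠ 0 :=
  prod_ne_zero_iff.2 fun _ _ => prod_ne_zero_iff.2 fun _ hi =>
    sub_ne_zero.2 (hx.ne (mem_range.1 hi).ne')

end Vandermonde

namespace Nat

def succAbove (c j : ℕ) : ℕ := if j < c then j else j + 1

theorem succAbove_of_lt {c j : ℕ} (h : j < c) : c.succAbove j = j := if_pos h

theorem succAbove_of_le {c j : ℕ} (h : c ≤ j) : c.succAbove j = j + 1 := if_neg h.not_gt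

theorem succAbove_le_succ (c j : ℕ) : c.succAbove j ≤ j + 1 := by
  unfold succAbove; split_ifs <;> omega

end Nat

theorem Finset.prod_range_succ_eq_mul_prod_succAbove {M : Type*} [CommMonoid M] (f : ℕ → M)
    {c N : ℕ} (hc : c ≤ N) :
    ∏ i ∈ range (N + 1), f i = f c * ∏ i ∈ range N, f (c.succAbove i) := by
  obtain ⟨k, rfl⟩ := Nat.exists_eq_add_of_le hc
  rw [Nat.add_assoc, prod_range_add, prod_range_succ' (fun i => f (c + i)), prod_range_add]
  have below : ∏ i ∈ range c, f (c.succAbove i) = ∏ i ∈ range c, f i :=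
    prod_congr rfl fun i hi => by rw [Nat.succAbove_of_lt (mem_range.1 hi)]
  have above : ∏ i ∈ range k, f (c.succAbove (c + i)) = ∏ i ∈ range k, f (c + (i + 1)) :=
    prod_congr rfl fun i _ => by rw [Nat.succAbove_of_le (Nat.le_add_right c i)]; rfl
  rw [below, above, Nat.add_zero]
  ac_rfl

theorem hookLam_sub_add {m k N j : ℕ} (hk : k ≤ N) (hj : j ≤ N) :
    hookLam m k (N + 1 - j) + j = if j < N then (N - k).succAbove j else m + N := by
  unfold hookLam Nat.succAbove
  split_ifs <;> omega

theorem Sspec_eq_div (q N : ℕ) (lam : ℕ → ℕ) (t : RatFunc ℚ) :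
    Sspec q N lam t = vandermondeProd (fun j => t ^ q ^ (lam (N - j) + j)) N /
      vandermondeProd (fun j => t ^ q ^ j) N := by
  simp only [Sspec, vandermondeProd, prod_div_distrib]

/-- The Vandermonde ratio attached to the exponent set `{0, …, N} \ {c} ∪ {a}`. -/
def hookRatio {K : Type*} [Field K] (x : ℕ → K) (N c a : ℕ) : K :=
  vandermondeProd (fun j => x (c.succAbove j)) N *
    (∏ i ∈ range N, (x a - x (c.succAbove i))) / vandermondeProd x (N + 1)

theorem Sspec_hookLam (q m : ℕ) {k N : ℕ} (hk : k ≤ N) (t : RatFunc ℚ) :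
    Sspec q (N + 1) (hookLam m k) t = hookRatio (fun r => t ^ q ^ r) N (N - k) (m + N) := by
  rw [Sspec_eq_div, hookRatio, vandermondeProd_congr (y := fun j =>
      t ^ q ^ if j < N then (N - k).succAbove j else m + N)
    fun j hj => by rw [hookLam_sub_add hk (Nat.lt_succ_iff.1 hj)],
    vandermondeProd_succ, if_neg (lt_irrefl N)]
  congr 2
  · exact vandermondeProd_congr fun j hj => by rw [if_pos hj]
  · exact prod_congr rfl fun i hi => by rw [if_pos (mem_range.1 hi)]

theorem hookRatio_recurrence {K : Type*} [Field K] {x : ℕ → K} (hx : Function.Injective x)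
    {p c : ℕ} (hc : c ≤ p) (a : ℕ) :
    hookRatio x (p + 1) c a + hookRatio x p c a =
      hookRatio x (p + 1) (p + 1) a * hookRatio x p c (p + 1) := by
  set P : K → K := fun y => ∏ i ∈ range p, (y - x (c.succAbove i))
  have hlast : c.succAbove p = p + 1 := Nat.succAbove_of_le hc
  have hV : vandermondeProd (fun j => x (c.succAbove j)) (p + 1) =
      vandermondeProd (fun j => x (c.succAbove j)) p * P (x (p + 1)) := by
    rw [vandermondeProd_succ, hlast]
  have hP (y : K) : ∏ i ∈ range (p + 1), (y - x (c.succAbove i)) = P y * (y - x (p + 1)) := by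
    rw [prod_range_succ, hlast]
  have hsplit (y : K) : ∏ i ∈ range (p + 1), (y - x i) = (y - x c) * P y :=
    prod_range_succ_eq_mul_prod_succAbove (fun i => y - x i) hc
  have hD : vandermondeProd x (p + 1 + 1) =
      vandermondeProd x (p + 1) * ((x (p + 1) - x c) * P (x (p + 1))) := by
    rw [vandermondeProd_succ, hsplit]
  have hid : ∀ j < p + 1, (p + 1).succAbove j = j := fun j hj => Nat.succAbove_of_lt hj
  have hVid : vandermondeProd (fun j => x ((p + 1).succAbove j)) (p + 1) =
      vandermondeProd x (p + 1) :=
    vandermondeProd_congr fun j hj => by rw [hid j hj]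
  have hPid : ∏ i ∈ range (p + 1), (x a - x ((p + 1).succAbove i)) = (x a - x c) * P (x a) := by
    rw [← hsplit]
    exact prod_congr rfl fun i hi => by rw [hid i (mem_range.1 hi)]
  have hD0 : vandermondeProd x (p + 1) ≠ 0 := vandermondeProd_ne_zero hx _
  have hW0 : x (p + 1) - x c ≠ 0 := sub_ne_zero.2 (hx.ne (by omega))
  have hP0 : P (x (p + 1)) ≠ 0 := prod_ne_zero_iff.2 fun i hi =>
    sub_ne_zero.2 (hx.ne ((Nat.succAbove_le_succ c i).trans_lt (by simpa using hi)).ne')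
  unfold hookRatio
  rw [hV, hP, hD, hVid, hPid]
  field_simp
  ring

theorem RatFunc.X_pow_injective (K : Type*) [Field K] :
    Function.Injective fun n : ℕ => (RatFunc.X : RatFunc K) ^ n := by
  intro a b h
  simp only [← RatFunc.algebraMap_X, ← map_pow] at h
  simpa using congrArg Polynomial.natDegree (RatFunc.algebraMap_injective K h)

/-- For `m ≥ 0`, `k+1 ≥ 1` and `n ≥ k+1`, the hook principal specializations satisfy
`S_{(m,1^{k+1})}(1,…,t^n) + S_{(m+1,1^k)}(1,…,t^{n-1}) = H_m(1,…,t^n) · E_{k+1}(1,…,t^{n-1})`,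
where `H_m = S_{(m)}` and `E_{k+1} = S_{(1^{k+1})}`. -/
theorem hook_specialization_recurrence (q m k n : ℕ) (hq : 2 ≤ q) (hn : k + 1 ≤ n) :
    Sspec q (n + 1) (hookLam m (k + 1)) RatFunc.X + Sspec q n (hookLam (m + 1) k) RatFunc.X
      = Sspec q (n + 1) (hookLam m 0) RatFunc.X * Sspec q n (hookLam 1 k) RatFunc.X := by
  obtain ⟨p, rfl⟩ : ∃ p, n = p + 1 := ⟨n - 1, by omega⟩
  have hk : k ≤ p := by omega
  rw [Sspec_hookLam q m hn, Sspec_hookLam q (m + 1) hk, Sspec_hookLam q m (Nat.zero_le _),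
    Sspec_hookLam q 1 hk, Nat.add_sub_add_right, Nat.sub_zero, Nat.add_right_comm m 1 p,
    Nat.add_comm 1 p]
  exact hookRatio_recurrence ((RatFunc.X_pow_injective ℚ).comp (Nat.pow_right_injective hq))
    (Nat.sub_le p k) (m + (p + 1))
end
end
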